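/- Let Φ be the linear flow on ℝ^{2d} generated by the nilpotent Jordan block J_{2d} (d ∈ ℕ). Then the uniform (0,0)-core, the (0,0)-core, the uniform core, and the core of Φ all equal V = span{e_1, …, e_d}, the span of the first d standard basis vectors. -/

import Mathlib

open Filter Topology

/-- The linear flow on `ℝ^m` generated by the nilpotent single Jordan block `J_m`. -/
noncomputable def jordanFlow (m : ℕ) (t : ℝ) (x : Fin m → ℝ) : Fin m → ℝ :=
  (NormedSpace.exp
    (t • (Matrix.of fun i j : Fin m => if (i : ℕ) + 1 = (j : ℕ) then (1 : ℝ) else 0))).mulVec x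

/-- The core `C(Φ, ℝ^m)` of the Jordan flow. -/
def jordanCoreC (m : ℕ) : Set (Fin m → ℝ) :=
  {x | ∃ (tp tm : ℕ → ℝ) (up um : ℕ → Fin m → ℝ),
    Tendsto tp atTop atTop ∧ Tendsto tm atTop atBot ∧
    Tendsto up atTop (𝓝 x) ∧ Tendsto um atTop (𝓝 x) ∧
    (∃ M : ℝ, ∀ n, ‖jordanFlow m (tp n) (up n)‖ ≤ M) ∧
    (∃ M : ℝ, ∀ n, ‖jordanFlow m (tm n) (um n)‖ ≤ M)}

/-- The `(0,0)`-core `C₀(Φ, ℝ^m)` of the Jordan flow. -/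
def jordanCoreC0 (m : ℕ) : Set (Fin m → ℝ) :=
  {x | ∃ (tp tm : ℕ → ℝ) (up um : ℕ → Fin m → ℝ),
    Tendsto tp atTop atTop ∧ Tendsto tm atTop atBot ∧
    Tendsto up atTop (𝓝 x) ∧ Tendsto um atTop (𝓝 x) ∧
    Tendsto (fun n => jordanFlow m (tp n) (up n)) atTop (𝓝 0) ∧
    Tendsto (fun n => jordanFlow m (tm n) (um n)) atTop (𝓝 0)}

/-- The uniform core `C*(Φ, ℝ^m)` of the Jordan flow. -/
def jordanCoreCstar (m : ℕ) : Set (Fin m → ℝ) :=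
  {x | ∀ t : ℕ → ℝ, Tendsto (fun n => |t n|) atTop atTop →
    ∃ u : ℕ → Fin m → ℝ, Tendsto u atTop (𝓝 x) ∧
      ∃ M : ℝ, ∀ n, ‖jordanFlow m (t n) (u n)‖ ≤ M}

/-- The uniform `(0,0)`-core `C₀*(Φ, ℝ^m)` of the Jordan flow. -/
def jordanCoreC0star (m : ℕ) : Set (Fin m → ℝ) :=
  {x | ∀ t : ℕ → ℝ, Tendsto (fun n => |t n|) atTop atTop →
    ∃ u : ℕ → Fin m → ℝ, Tendsto u atTop (𝓝 x) ∧
      Tendsto (fun n => jordanFlow m (t n) (u n)) atTop (𝓝 0)}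


open Polynomial Finset

noncomputable def Jm (m : ℕ) : Matrix (Fin m) (Fin m) ℝ :=
  Matrix.of fun i j : Fin m => if (i : ℕ) + 1 = (j : ℕ) then (1 : ℝ) else 0

lemma Jm_pow (m k : ℕ) : (Jm m)^k =
    Matrix.of (fun i j : Fin m => if (i:ℕ) + k = (j:ℕ) then (1:ℝ) else 0) := by
  induction k with
  | zero =>
    ext i j
    simp [Matrix.one_apply, Fin.ext_iff]
  | succ k ih =>
    ext i j
    rw [pow_succ, ih, Matrix.mul_apply]
    simp only [Jm, Matrix.of_apply]
    by_cases h : (i:ℕ) + k < m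
    · rw [Finset.sum_eq_single (⟨(i:ℕ)+k, h⟩ : Fin m)]
      · rw [if_pos rfl, one_mul]
        have : ((⟨(i:ℕ)+k, h⟩ : Fin m) : ℕ) + 1 = (j:ℕ) ↔ (i:ℕ) + (k+1) = (j:ℕ) := by
          simp; omega
        simp only [eq_iff_iff] at *
        by_cases h2 : (i:ℕ) + (k+1) = (j:ℕ)
        · rw [if_pos (this.mpr h2), if_pos h2]
        · rw [if_neg (fun hc => h2 (this.mp hc)), if_neg h2]
      · intro b _ hb
        rw [if_neg, zero_mul]
        intro hc
        exact hb (by simp [Fin.ext_iff, ← hc])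
      · simp
    · rw [Finset.sum_eq_zero, eq_comm, if_neg (by omega)]
      intro b _
      rw [if_neg (by omega), zero_mul]

lemma exp_tJ (m : ℕ) (t : ℝ) : NormedSpace.exp (t • Jm m) =
    Matrix.of (fun i j : Fin m =>
      if (i:ℕ) ≤ (j:ℕ) then t^((j:ℕ)-(i:ℕ))/(((j:ℕ)-(i:ℕ)).factorial : ℝ) else 0) := by
  rw [NormedSpace.exp_eq_tsum ℝ]
  have hzero : ∀ n ∉ Finset.range m, ((n.factorial:ℝ)⁻¹) • (t • Jm m)^n = 0 := by
    intro n hn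
    rw [Finset.mem_range, not_lt] at hn
    rw [_root_.smul_pow, Jm_pow]
    have : (Matrix.of (fun i j : Fin m => if (i:ℕ) + n = (j:ℕ) then (1:ℝ) else 0)) = 0 := by
      ext i j
      rw [Matrix.of_apply, if_neg (by omega)]
      rfl
    rw [this, smul_zero, smul_zero]
  dsimp only; rw [tsum_eq_sum hzero]
  ext i j
  rw [Matrix.sum_apply]
  simp only [_root_.smul_pow, Jm_pow, Matrix.smul_apply, Matrix.of_apply, smul_eq_mul, smul_ite,
    mul_ite, mul_one, mul_zero, smul_zero]
  by_cases hij : (i:ℕ) ≤ (j:ℕ)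
  · rw [Finset.sum_eq_single ((j:ℕ)-(i:ℕ))]
    · rw [if_pos (by omega), if_pos hij]; ring
    · intro b _ hb
      rw [if_neg (by omega)]
    · intro h
      exact absurd (by omega : (j:ℕ)-(i:ℕ) < m) (by simpa using h)
  · rw [Finset.sum_eq_zero, if_neg hij]
    intro b _
    rw [if_neg (by omega)]

lemma jordanFlow_eq (m : ℕ) (t : ℝ) (x : Fin m → ℝ) :
    (NormedSpace.exp
      (t • (Matrix.of fun i j : Fin m => if (i : ℕ) + 1 = (j : ℕ) then (1 : ℝ) else 0))).mulVec x
    = fun i : Fin m => ∑ j : Fin m,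
      (if (i:ℕ) ≤ (j:ℕ) then t^((j:ℕ)-(i:ℕ))/(((j:ℕ)-(i:ℕ)).factorial : ℝ) else 0) * x j := by
  funext i
  rw [show (Matrix.of fun i j : Fin m => if (i : ℕ) + 1 = (j : ℕ) then (1 : ℝ) else 0) = Jm m
    from rfl, exp_tJ]
  simp [Matrix.mulVec, dotProduct]

lemma jordanFlow_comp (m : ℕ) (t : ℝ) (x : Fin m → ℝ) :
    (NormedSpace.exp ((-t) • Jm m)).mulVec ((NormedSpace.exp (t • Jm m)).mulVec x) = x := by
  rw [Matrix.mulVec_mulVec, ← Matrix.exp_add_of_commute]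
  · rw [← add_smul, neg_add_cancel, zero_smul, NormedSpace.exp_zero, Matrix.one_mulVec]
  · exact (Commute.refl (Jm m)).smul_left t |>.smul_right (-t) |>.symm

lemma jordanFlow_apply (m : ℕ) (t : ℝ) (x : Fin m → ℝ) (i : Fin m) :
    jordanFlow m t x i = ∑ j : Fin m,
      (if (i:ℕ) ≤ (j:ℕ) then t^((j:ℕ)-(i:ℕ))/((((j:ℕ)-(i:ℕ)).factorial : ℕ):ℝ) else 0) * x j :=
  congrFun (jordanFlow_eq m t x) i

lemma jordanFlow_group (m : ℕ) (t : ℝ) (x : Fin m → ℝ) :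
    jordanFlow m (-t) (jordanFlow m t x) = x :=
  jordanFlow_comp m t x

lemma choose_le_two_pow_real (n k : ℕ) : (n.choose k : ℝ) ≤ 2^n := by
  have h : n.choose k ≤ 2^n := by
    rcases le_or_gt k n with h | h
    · calc n.choose k ≤ ∑ m ∈ range (n+1), n.choose m :=
        Finset.single_le_sum (fun _ _ => Nat.zero_le _) (by simp; omega)
      _ = 2^n := Nat.sum_range_choose n
    · rw [Nat.choose_eq_zero_of_lt h]; positivity
  calc (n.choose k : ℝ) ≤ (2^n : ℕ) := by exact_mod_cast h
  _ = 2^n := by push_cast; ring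

lemma coeff_one_sub_pow (y : ℝ) (d a : ℕ) :
    ((1 - C y * X : ℝ[X])^d).coeff a = (d.choose a : ℝ) * (-y)^a := by
  have h1 : (1 - C y * X : ℝ[X]) = C (-y) * X + 1 := by
    rw [map_neg]; ring
  rw [h1, add_pow]
  rw [finset_sum_coeff]
  have h2 : ∀ k ∈ range (d+1),
      ((C (-y) * X)^k * 1^(d-k) * (d.choose k : ℝ[X])).coeff a
      = if k = a then (d.choose a : ℝ) * (-y)^a else 0 := by
    intro k _
    rw [one_pow, mul_one, mul_pow, ← map_pow]
    have : ((d.choose k : ℕ) : ℝ[X]) = C ((d.choose k : ℕ) : ℝ) := by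
      simp
    rw [this, mul_comm (C ((-y)^k) * X^k) _, ← mul_assoc, ← map_mul, coeff_C_mul, coeff_X_pow]
    by_cases h : k = a
    · subst h
      rw [if_pos rfl, if_pos rfl]
      ring
    · rw [if_neg (fun hc => h hc.symm), if_neg h, mul_zero]
  rw [Finset.sum_congr rfl h2, Finset.sum_ite_eq' (range (d+1)) a]
  by_cases ha : a ∈ range (d+1)
  · rw [if_pos ha]
  · rw [if_neg ha, Nat.choose_eq_zero_of_lt (by simpa using ha)]
    simp

lemma natDegree_lt_of_coeff (q : ℝ[X]) (d : ℕ) (hd : 0 < d) (h : ∀ b, d ≤ b → q.coeff b = 0) :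
    q.natDegree < d := by
  by_contra hc
  push_neg at hc
  have h0 : q ≠ 0 := by
    intro h0
    rw [h0] at hc
    simp at hc
    omega
  exact h0 (Polynomial.leadingCoeff_eq_zero.mp (h _ hc))

lemma coeff_range_sum (d : ℕ) (f : ℕ → ℝ) (n : ℕ) :
    (∑ b ∈ range d, C (f b) * X^b : ℝ[X]).coeff n = if n < d then f n else 0 := by
  rw [finset_sum_coeff]
  simp only [coeff_C_mul, coeff_X_pow, mul_ite, mul_one, mul_zero]
  rw [Finset.sum_ite_eq (range d) n f]
  simp [Finset.mem_range]

lemma gp_coeff_low (d : ℕ) (hd : 0 < d) (xc : ℕ → ℝ) (y : ℝ) :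
    ∀ n, n < d → ((1 - C y * X)^d *
      (∑ b ∈ range d, C (∑ ce ∈ Finset.HasAntidiagonal.antidiagonal b,
        xc ce.1 * (((d-1+ce.2).choose (d-1) : ℝ) * y^ce.2)) * X^b) : ℝ[X]).coeff n = xc n := by
  set P : ℝ[X] := ∑ j ∈ range d, C (xc j) * X^j with hP
  set qcf : ℕ → ℝ := fun b => ∑ ce ∈ Finset.HasAntidiagonal.antidiagonal b,
    xc ce.1 * (((d-1+ce.2).choose (d-1) : ℝ) * y^ce.2) with hqcf
  set Qp : ℝ[X] := ∑ b ∈ range d, C (qcf b) * X^b with hQp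
  intro n hn
  have hres : (PowerSeries.rescale y (PowerSeries.invOneSubPow ℝ d).val)
      = PowerSeries.mk (fun e => ((d-1+e).choose (d-1) : ℝ) * y^e) := by
    ext e
    rw [PowerSeries.coeff_rescale,
      PowerSeries.invOneSubPow_val_eq_mk_sub_one_add_choose_of_pos _ _ hd,
      PowerSeries.coeff_mk, PowerSeries.coeff_mk, mul_comm]
  have hQcoeff : ∀ b, b < d → PowerSeries.coeff b (Qp : PowerSeries ℝ)
      = PowerSeries.coeff b ((P : PowerSeries ℝ) *
          PowerSeries.rescale y (PowerSeries.invOneSubPow ℝ d).val) := by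
    intro b hb
    rw [PowerSeries.coeff_mul, Polynomial.coeff_coe, hQp, coeff_range_sum, if_pos hb, hqcf]
    apply Finset.sum_congr rfl
    intro ce hce
    rw [Finset.HasAntidiagonal.mem_antidiagonal] at hce
    rw [Polynomial.coeff_coe, hres, PowerSeries.coeff_mk, hP, coeff_range_sum, if_pos (by omega)]
  have hcoe : ((1 - C y * X : ℝ[X]) : PowerSeries ℝ) = 1 - PowerSeries.C y * PowerSeries.X := by
    rw [← coeToPowerSeries.ringHom_apply, map_sub, map_one, map_mul,
      coeToPowerSeries.ringHom_apply, coeToPowerSeries.ringHom_apply,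
      Polynomial.coe_C, Polynomial.coe_X]
  have h1 : ((1 : PowerSeries ℝ) - PowerSeries.C y * PowerSeries.X)
      = PowerSeries.rescale y (1 - PowerSeries.X) := by
    ext e
    rw [PowerSeries.coeff_rescale]
    rcases e with _ | e
    · simp
    · rcases e with _ | e
      · simp
      · simp [PowerSeries.coeff_one, PowerSeries.coeff_X]
  have hunit : (PowerSeries.rescale y (PowerSeries.invOneSubPow ℝ d).val)
      * ((1 - PowerSeries.C y * PowerSeries.X)^d) = 1 := by
    rw [h1, ← map_pow, ← map_mul]
    have : (PowerSeries.invOneSubPow ℝ d).val * (1 - PowerSeries.X)^d = 1 := by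
      rw [← PowerSeries.invOneSubPow_inv_eq_one_sub_pow]
      exact (PowerSeries.invOneSubPow ℝ d).val_inv
    rw [this, map_one]
  -- main computation
  have main : PowerSeries.coeff n (((1 - C y * X)^d * Qp : ℝ[X]) : PowerSeries ℝ)
      = PowerSeries.coeff n (P : PowerSeries ℝ) := by
    rw [Polynomial.coe_mul, PowerSeries.coeff_mul]
    have step : ∀ ab ∈ Finset.HasAntidiagonal.antidiagonal n,
        (PowerSeries.coeff ab.1 ((((1 - C y * X)^d : ℝ[X])) : PowerSeries ℝ)) *
          PowerSeries.coeff ab.2 (Qp : PowerSeries ℝ)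
        = (PowerSeries.coeff ab.1 ((((1 - C y * X)^d : ℝ[X])) : PowerSeries ℝ)) *
          PowerSeries.coeff ab.2 ((P : PowerSeries ℝ) *
            PowerSeries.rescale y (PowerSeries.invOneSubPow ℝ d).val) := by
      intro ab hab
      rw [Finset.HasAntidiagonal.mem_antidiagonal] at hab
      rw [hQcoeff ab.2 (by omega)]
    rw [Finset.sum_congr rfl step, ← PowerSeries.coeff_mul]
    have hco2 : (((1 - C y * X)^d : ℝ[X]) : PowerSeries ℝ)
        = (1 - PowerSeries.C y * PowerSeries.X)^d := by
      rw [Polynomial.coe_pow, hcoe]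
    rw [hco2, show (1 - PowerSeries.C y * PowerSeries.X)^d * ((P : PowerSeries ℝ) *
        PowerSeries.rescale y (PowerSeries.invOneSubPow ℝ d).val)
      = (P : PowerSeries ℝ) * ((PowerSeries.rescale y (PowerSeries.invOneSubPow ℝ d).val) *
        (1 - PowerSeries.C y * PowerSeries.X)^d) from by ring, hunit, mul_one]
  rw [← Polynomial.coeff_coe, main, Polynomial.coeff_coe, hP, coeff_range_sum, if_pos hn]

lemma flow_eq_taylor (m : ℕ) (t : ℝ) (g : ℝ[X]) (hg : g.natDegree < m) (i : Fin m) :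
    ∑ j : Fin m, (if (i:ℕ) ≤ (j:ℕ) then t^((j:ℕ)-(i:ℕ))/((((j:ℕ)-(i:ℕ)).factorial : ℕ):ℝ) else 0) *
      (((j:ℕ).factorial : ℝ) * g.coeff (j:ℕ))
    = ((i:ℕ).factorial : ℝ) * ((Polynomial.taylor t g).coeff (i:ℕ)) := by
  set i0 := (i:ℕ) with hi0def
  have hi0 : i0 < m := i.isLt
  have hdeg : (hasseDeriv i0 g).natDegree < m :=
    lt_of_le_of_lt (le_trans (natDegree_hasseDeriv_le g i0) (Nat.sub_le _ _)) hg
  rw [taylor_coeff, eval_eq_sum_range' hdeg, Fin.sum_univ_eq_sum_range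
    (fun j => (if i0 ≤ j then t^(j-i0)/(((j-i0).factorial : ℕ):ℝ) else 0) *
      (((j).factorial : ℝ) * g.coeff j)) m]
  -- LHS reduction
  have hL : ∑ j ∈ range m, (if i0 ≤ j then t^(j-i0)/(((j-i0).factorial : ℕ):ℝ) else 0) *
      (((j).factorial : ℝ) * g.coeff j)
      = ∑ n ∈ range (m - i0), (t^n/(((n).factorial : ℕ):ℝ)) *
          ((((i0+n)).factorial : ℝ) * g.coeff (i0+n)) := by
    rw [Finset.range_eq_Ico, ← Finset.sum_Ico_consecutive _ (Nat.zero_le i0) hi0.le]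
    have h0 : ∑ j ∈ Finset.Ico 0 i0, (if i0 ≤ j then t^(j-i0)/(((j-i0).factorial : ℕ):ℝ) else 0) *
        (((j).factorial : ℝ) * g.coeff j) = 0 := by
      apply Finset.sum_eq_zero
      intro j hj
      rw [Finset.mem_Ico] at hj
      rw [if_neg (by omega), zero_mul]
    rw [h0, zero_add, Finset.sum_Ico_eq_sum_range]
    apply Finset.sum_congr rfl
    intro n _
    rw [if_pos (Nat.le_add_right _ _), Nat.add_sub_cancel_left]
  rw [hL, Finset.mul_sum]
  have hsub : Finset.range (m - i0) ⊆ Finset.range m := by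
    apply Finset.range_subset_range.mpr; omega
  rw [← Finset.sum_subset hsub (by
    intro n _ hn
    rw [Finset.mem_range, not_lt] at hn
    rw [hasseDeriv_coeff, coeff_eq_zero_of_natDegree_lt (lt_of_lt_of_le hg (by omega)),
      mul_zero, zero_mul, mul_zero])]
  apply Finset.sum_congr rfl
  intro n _
  rw [hasseDeriv_coeff]
  have hfact : (((i0+n).factorial : ℕ) : ℝ)
      = ((n+i0).choose i0 : ℝ) * ((i0.factorial : ℕ) : ℝ) * ((n.factorial : ℕ) : ℝ) := by
    have := Nat.choose_mul_factorial_mul_factorial (Nat.le_add_left i0 n)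
    have h2 : (n + i0) - i0 = n := by omega
    rw [h2] at this
    have h3 : i0 + n = n + i0 := by omega
    rw [h3, ← this]
    push_cast
    ring
  have hn0 : (((n).factorial : ℕ):ℝ) ≠ 0 := by positivity
  have h3 : i0 + n = n + i0 := by omega
  rw [h3] at hfact ⊢
  rw [hfact]
  field_simp

lemma key_construction (d : ℕ) (hd : 0 < d) (x : Fin (2*d) → ℝ)
    (hx : ∀ i : Fin (2*d), d ≤ (i:ℕ) → x i = 0) :
    ∃ K : ℝ, 0 ≤ K ∧ ∃ U : ℝ → Fin (2*d) → ℝ, ∀ t : ℝ, 1 ≤ |t| →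
      (∀ i : Fin (2*d), |U t i - x i| ≤ K / |t|) ∧
      (∀ i : Fin (2*d), |jordanFlow (2*d) t (U t) i| ≤ K / |t|) := by
  classical
  set xc : ℕ → ℝ := fun c => if h : c < 2*d then x ⟨c, h⟩ / (c.factorial : ℝ) else 0 with hxc
  set qcf : ℝ → ℕ → ℝ := fun y b => ∑ ce ∈ Finset.HasAntidiagonal.antidiagonal b,
    xc ce.1 * (((d-1+ce.2).choose (d-1) : ℝ) * y^ce.2) with hqcf
  set qp : ℝ → ℝ[X] := fun y => ∑ b ∈ range d, C (qcf y b) * X^b with hqp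
  set gp : ℝ → ℝ[X] := fun y => (1 - C y * X)^d * qp y with hgp
  set Q : ℝ := ∑ b ∈ range d, ∑ ce ∈ Finset.HasAntidiagonal.antidiagonal b,
    |xc ce.1| * (((d-1+ce.2).choose (d-1) : ℝ)) with hQ
  have hQ0 : 0 ≤ Q := by
    apply Finset.sum_nonneg
    intro b _
    apply Finset.sum_nonneg
    intro ce _
    positivity
  set K : ℝ := (((2*d).factorial : ℕ) : ℝ) * (2*d) * 2^(2*d) * (Q+1) with hK
  have hK0 : 0 ≤ K := by positivity
  refine ⟨K, hK0, fun t => (fun i => (((i:ℕ).factorial : ℕ) : ℝ) * (gp t⁻¹).coeff (i:ℕ)),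
    fun t ht => ?_⟩
  have ht0 : (0:ℝ) < |t| := lt_of_lt_of_le one_pos ht
  have htne : t ≠ 0 := abs_pos.mp ht0
  set y := t⁻¹ with hy
  have hyabs : |y| = |t|⁻¹ := abs_inv t
  have hy1 : |y| ≤ 1 := by
    rw [hyabs, ← one_div]
    exact (div_le_one ht0).mpr ht
  have hqcoeff : ∀ n, (qp y).coeff n = if n < d then qcf y n else 0 :=
    fun n => coeff_range_sum d _ n
  have hqb : ∀ n, |(qp y).coeff n| ≤ Q := by
    intro n
    rw [hqcoeff]
    by_cases h : n < d
    · rw [if_pos h]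
      calc |qcf y n| ≤ ∑ ce ∈ Finset.HasAntidiagonal.antidiagonal n,
          |xc ce.1 * (((d-1+ce.2).choose (d-1) : ℝ) * y^ce.2)| := Finset.abs_sum_le_sum_abs _ _
        _ ≤ ∑ ce ∈ Finset.HasAntidiagonal.antidiagonal n, |xc ce.1| * (((d-1+ce.2).choose (d-1) : ℝ)) := by
          apply Finset.sum_le_sum
          intro ce _
          rw [abs_mul, abs_mul, abs_pow]
          rw [abs_of_nonneg (show (0:ℝ) ≤ ((d-1+ce.2).choose (d-1) : ℝ) by positivity)]
          calc |xc ce.1| * (((d-1+ce.2).choose (d-1) : ℝ) * |y|^ce.2)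
              ≤ |xc ce.1| * (((d-1+ce.2).choose (d-1) : ℝ) * 1) := by
                gcongr
                exact pow_le_one₀ (abs_nonneg y) hy1
            _ = |xc ce.1| * (((d-1+ce.2).choose (d-1) : ℝ)) := by ring
        _ ≤ Q := by
          rw [hQ]
          exact Finset.single_le_sum
            (f := fun b => ∑ ce ∈ Finset.HasAntidiagonal.antidiagonal b,
              |xc ce.1| * (((d-1+ce.2).choose (d-1) : ℝ)))
            (fun b _ => Finset.sum_nonneg (fun ce _ => by positivity)) (mem_range.mpr h)
    · rw [if_neg h, abs_zero]
      exact hQ0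
  have hglow : ∀ n, n < d → (gp y).coeff n = xc n := gp_coeff_low d hd xc y
  have hgcoeff : ∀ a, (gp y).coeff a = ∑ ab ∈ Finset.HasAntidiagonal.antidiagonal a,
      ((d.choose ab.1 : ℝ) * (-y)^ab.1) * ((qp y).coeff ab.2) := by
    intro a
    show ((1 - C y * X)^d * qp y).coeff a = _
    rw [Polynomial.coeff_mul]
    exact Finset.sum_congr rfl (fun ab _ => by rw [coeff_one_sub_pow])
  have hgd : ∀ j, d ≤ j → j < 2*d → |(gp y).coeff j| ≤ (2*d) * ((2^d * Q) * |y|) := by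
    intro j hj hj2
    rw [hgcoeff]
    calc |∑ ab ∈ Finset.HasAntidiagonal.antidiagonal j, ((d.choose ab.1 : ℝ) * (-y)^ab.1) * ((qp y).coeff ab.2)|
        ≤ ∑ ab ∈ Finset.HasAntidiagonal.antidiagonal j,
          |((d.choose ab.1 : ℝ) * (-y)^ab.1) * ((qp y).coeff ab.2)| :=
        Finset.abs_sum_le_sum_abs _ _
      _ ≤ ∑ _ab ∈ Finset.HasAntidiagonal.antidiagonal j, (2^d * Q) * |y| := by
        apply Finset.sum_le_sum
        intro ab hab
        rw [Finset.HasAntidiagonal.mem_antidiagonal] at hab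
        by_cases h2 : ab.2 < d
        · have h1 : 1 ≤ ab.1 := by omega
          rw [abs_mul, abs_mul, abs_pow, abs_neg]
          rw [abs_of_nonneg (show (0:ℝ) ≤ (d.choose ab.1 : ℝ) by positivity)]
          have hpw : |y|^ab.1 ≤ |y| := by
            calc |y|^ab.1 ≤ |y|^1 := pow_le_pow_of_le_one (abs_nonneg y) hy1 h1
              _ = |y| := pow_one _
          calc (d.choose ab.1 : ℝ) * |y|^ab.1 * |(qp y).coeff ab.2|
              ≤ 2^d * |y| * Q := by
                apply mul_le_mul _ (hqb _) (abs_nonneg _) (by positivity)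
                exact mul_le_mul (choose_le_two_pow_real d ab.1) hpw (by positivity)
                  (by positivity)
            _ = (2^d * Q) * |y| := by ring
        · rw [hqcoeff, if_neg h2, mul_zero, abs_zero]
          positivity
      _ = ((j:ℝ)+1) * ((2^d * Q) * |y|) := by
        rw [Finset.sum_const, Finset.Nat.card_antidiagonal, nsmul_eq_mul]
        push_cast
        ring
      _ ≤ (2*d) * ((2^d * Q) * |y|) := by
        have : ((j:ℝ)+1) ≤ 2*d := by
          have : (j:ℝ) + 1 ≤ ((2*d : ℕ) : ℝ) := by exact_mod_cast hj2
          simpa using this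
        apply mul_le_mul_of_nonneg_right this
        positivity
  have hgdeg : (gp y).natDegree < 2*d := by
    apply natDegree_lt_of_coeff _ _ (by omega)
    intro a ha
    rw [hgcoeff]
    apply Finset.sum_eq_zero
    intro ab hab
    rw [Finset.HasAntidiagonal.mem_antidiagonal] at hab
    by_cases h2 : ab.2 < d
    · have : d < ab.1 := by omega
      rw [Nat.choose_eq_zero_of_lt this]
      simp
    · rw [hqcoeff, if_neg h2, mul_zero]
  constructor
  · -- closeness to x
    intro i
    show |(((i:ℕ).factorial : ℕ) : ℝ) * (gp y).coeff (i:ℕ) - x i| ≤ K / |t|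
    by_cases hi : (i:ℕ) < d
    · have hxi : (((i:ℕ).factorial : ℕ) : ℝ) * (gp y).coeff (i:ℕ) = x i := by
        rw [hglow _ hi, hxc]
        simp only [dif_pos i.isLt]
        have hne : (((i:ℕ).factorial : ℕ) : ℝ) ≠ 0 := by positivity
        field_simp
      rw [hxi, sub_self, abs_zero]
      positivity
    · push_neg at hi
      rw [hx i hi, sub_zero, abs_mul]
      rw [abs_of_nonneg (show (0:ℝ) ≤ (((i:ℕ).factorial : ℕ) : ℝ) by positivity)]
      calc (((i:ℕ).factorial : ℕ) : ℝ) * |(gp y).coeff (i:ℕ)|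
          ≤ (((2*d).factorial : ℕ) : ℝ) * ((2*d) * ((2^d * Q) * |y|)) := by
            apply mul_le_mul _ (hgd _ hi i.isLt) (abs_nonneg _) (by positivity)
            exact_mod_cast Nat.factorial_le (le_of_lt i.isLt)
        _ ≤ K * |y| := by
            rw [hK]
            have hexp : (2:ℝ)^d ≤ 2^(2*d) := by
              apply pow_le_pow_right₀ one_le_two
              omega
            calc (((2*d).factorial : ℕ) : ℝ) * ((2*d) * ((2^d * Q) * |y|))
                = ((((2*d).factorial : ℕ) : ℝ) * (2*d) * 2^d * Q) * |y| := by ring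
              _ ≤ ((((2*d).factorial : ℕ) : ℝ) * (2*d) * 2^(2*d) * (Q+1)) * |y| := by
                  gcongr
                  linarith
              _ = _ := by ring
        _ = K / |t| := by rw [hyabs, div_eq_mul_inv]
  · -- flow bound
    intro i
    have hflow : jordanFlow (2*d) t (fun j => (((j:ℕ).factorial : ℕ) : ℝ) * (gp y).coeff (j:ℕ)) i
        = (((i:ℕ).factorial : ℕ) : ℝ) * ((Polynomial.taylor t (gp y)).coeff (i:ℕ)) := by
      rw [jordanFlow_apply]
      exact flow_eq_taylor (2*d) t (gp y) hgdeg i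
    show |jordanFlow (2*d) t (fun j => (((j:ℕ).factorial : ℕ) : ℝ) * (gp y).coeff (j:ℕ)) i| ≤ K / |t|
    rw [hflow]
    have hyt : y * t = 1 := inv_mul_cancel₀ htne
    have hfac2 : C (-y) * (X - C t) = (1 - C y * X : ℝ[X]) := by
      calc C (-y) * (X - C t) = C (-y) * X - C (-y) * C t := by ring
        _ = C (-y) * X - C (-y * t) := by rw [← map_mul]
        _ = C (-y) * X - C (-1) := by rw [neg_mul, hyt]
        _ = 1 - C y * X := by
            rw [map_neg, map_neg, map_one]
            ring
    have htaylorpow : ∀ (h : ℝ[X]) (k : ℕ),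
        Polynomial.taylor t (h^k) = (Polynomial.taylor t h)^k := by
      intro h k
      induction k with
      | zero => simp [taylor_one]
      | succ k ih => rw [pow_succ, taylor_mul, ih, pow_succ]
    have htay : Polynomial.taylor t (gp y)
        = C ((-y)^d) * (X^d * Polynomial.taylor t (qp y)) := by
      have e1 : gp y = ((-y)^d) • ((X - C t)^d * qp y) := by
        rw [hgp]
        show (1 - C y * X)^d * qp y = _
        rw [← hfac2, mul_pow, smul_eq_C_mul, ← map_pow]
        ring
      rw [e1, map_smul, taylor_mul, htaylorpow, map_sub, taylor_X, taylor_C,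
        add_sub_cancel_right, smul_eq_C_mul]
    have hcoefftay : ∀ i0 : ℕ, (Polynomial.taylor t (gp y)).coeff i0
        = (-y)^d * (if d ≤ i0 then (Polynomial.taylor t (qp y)).coeff (i0 - d) else 0) := by
      intro i0
      rw [htay, coeff_C_mul, mul_comm (X^d) _, coeff_mul_X_pow']
    by_cases hi : (i:ℕ) < d
    · rw [hcoefftay, if_neg (by omega), mul_zero, mul_zero, abs_zero]
      positivity
    · push_neg at hi
      rw [hcoefftay, if_pos hi]
      set k := (i:ℕ) - d with hk
      have hqdeg : (qp y).natDegree < d := by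
        apply natDegree_lt_of_coeff _ _ hd
        intro b hb
        rw [hqcoeff, if_neg (by omega)]
      have hhd : (hasseDeriv k (qp y)).natDegree < d :=
        lt_of_le_of_lt (le_trans (natDegree_hasseDeriv_le _ _) (Nat.sub_le _ _)) hqdeg
      rw [taylor_coeff, eval_eq_sum_range' hhd, Finset.mul_sum]
      have hkd : k ≤ d - 1 := by
        have := i.isLt
        omega
      have hterm : ∀ n ∈ range d, |(-y)^d * ((hasseDeriv k (qp y)).coeff n * t^n)|
          ≤ (2^(2*d) * Q) * |t|⁻¹ := by
        intro n hn
        rw [mem_range] at hn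
        rw [hasseDeriv_coeff, abs_mul, abs_mul, abs_mul, abs_pow, abs_neg, abs_pow]
        rw [abs_of_nonneg (show (0:ℝ) ≤ ((n+k).choose k : ℝ) by positivity)]
        have hyd : |y|^d * |t|^n ≤ |t|⁻¹ := by
          rw [hyabs, inv_pow]
          rw [show (|t|^d)⁻¹ * |t|^n = |t|^n / |t|^d from by ring]
          calc |t|^n / |t|^d ≤ |t|^(d-1) / |t|^d := by
                gcongr
                · omega
            _ = |t|⁻¹ := by
                rw [show d = (d-1)+1 from by omega, pow_succ, Nat.add_sub_cancel,
                  div_mul_eq_div_div, div_self (by positivity), one_div]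
        have hch : ((n+k).choose k : ℝ) ≤ 2^(2*d) := by
          calc ((n+k).choose k : ℝ) ≤ 2^(n+k) := choose_le_two_pow_real _ _
            _ ≤ 2^(2*d) := by
              apply pow_le_pow_right₀ one_le_two
              omega
        calc |y|^d * (((n+k).choose k : ℝ) * |(qp y).coeff (n+k)| * |t|^n)
            = (((n+k).choose k : ℝ) * |(qp y).coeff (n+k)|) * (|y|^d * |t|^n) := by ring
          _ ≤ (2^(2*d) * Q) * |t|⁻¹ := by
              apply mul_le_mul _ hyd (by positivity) (by positivity)
              exact mul_le_mul hch (hqb _) (abs_nonneg _) (by positivity)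
      calc |(((i:ℕ).factorial : ℕ) : ℝ) *
            ∑ n ∈ range d, (-y)^d * ((hasseDeriv k (qp y)).coeff n * t^n)|
          ≤ (((i:ℕ).factorial : ℕ) : ℝ) *
            ∑ n ∈ range d, |(-y)^d * ((hasseDeriv k (qp y)).coeff n * t^n)| := by
            rw [abs_mul, abs_of_nonneg (show (0:ℝ) ≤ (((i:ℕ).factorial : ℕ) : ℝ) by positivity)]
            apply mul_le_mul_of_nonneg_left (Finset.abs_sum_le_sum_abs _ _) (by positivity)
        _ ≤ (((2*d).factorial : ℕ) : ℝ) * ∑ _n ∈ range d, (2^(2*d) * Q) * |t|⁻¹ := by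
            apply mul_le_mul _ (Finset.sum_le_sum hterm) _ (by positivity)
            · exact_mod_cast Nat.factorial_le (le_of_lt i.isLt)
            · apply Finset.sum_nonneg
              intro n _
              positivity
        _ = (((2*d).factorial : ℕ) : ℝ) * ((d : ℝ) * ((2^(2*d) * Q) * |t|⁻¹)) := by
            rw [Finset.sum_const, Finset.card_range, nsmul_eq_mul]
        _ ≤ K / |t| := by
            rw [hK, div_eq_mul_inv]
            calc (((2*d).factorial : ℕ) : ℝ) * ((d : ℝ) * ((2^(2*d) * Q) * |t|⁻¹))
                = ((((2*d).factorial : ℕ) : ℝ) * (d : ℝ) * 2^(2*d) * Q) * |t|⁻¹ := by ring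
              _ ≤ ((((2*d).factorial : ℕ) : ℝ) * (2*d : ℝ) * 2^(2*d) * (Q+1)) * |t|⁻¹ := by
                  gcongr
                  · linarith [show (0:ℝ) ≤ (d:ℝ) from by positivity]
                  · linarith
              _ = _ := by
                  push_cast
                  ring

-- the reversed pairing is symmetric for the flow
lemma pairing_adj (m : ℕ) (t : ℝ) (a b : Fin m → ℝ) :
    ∑ i : Fin m, jordanFlow m t a i * b i.rev
    = ∑ i : Fin m, a i * jordanFlow m t b i.rev := by
  have hE : ∀ i j : Fin m,
      (if ((i.rev : ℕ)) ≤ (j:ℕ) then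
          t^((j:ℕ)-(i.rev:ℕ))/((((j:ℕ)-(i.rev:ℕ)).factorial : ℕ):ℝ) else 0)
      = (if ((j.rev : ℕ)) ≤ (i:ℕ) then
          t^((i:ℕ)-(j.rev:ℕ))/((((i:ℕ)-(j.rev:ℕ)).factorial : ℕ):ℝ) else 0) := by
    intro i j
    have hi := i.isLt
    have hj := j.isLt
    have hri : (i.rev : ℕ) = m - 1 - (i:ℕ) := by rw [Fin.val_rev]; omega
    have hrj : (j.rev : ℕ) = m - 1 - (j:ℕ) := by rw [Fin.val_rev]; omega
    by_cases h : (i.rev : ℕ) ≤ (j:ℕ)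
    · rw [if_pos h, if_pos (by omega), show (j:ℕ)-(i.rev:ℕ) = (i:ℕ)-(j.rev:ℕ) from by omega]
    · rw [if_neg h, if_neg (by omega)]
  calc ∑ i : Fin m, jordanFlow m t a i * b i.rev
      = ∑ i : Fin m, ∑ j : Fin m,
        ((if ((i:ℕ)) ≤ (j:ℕ) then
          t^((j:ℕ)-(i:ℕ))/((((j:ℕ)-(i:ℕ)).factorial : ℕ):ℝ) else 0) * a j) * b i.rev := by
        apply Finset.sum_congr rfl
        intro i _
        rw [jordanFlow_apply, Finset.sum_mul]
    _ = ∑ j : Fin m, ∑ i : Fin m,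
        ((if ((i:ℕ)) ≤ (j:ℕ) then
          t^((j:ℕ)-(i:ℕ))/((((j:ℕ)-(i:ℕ)).factorial : ℕ):ℝ) else 0) * a j) * b i.rev :=
        Finset.sum_comm
    _ = ∑ j : Fin m, ∑ i : Fin m,
        ((if ((i.rev:ℕ)) ≤ (j:ℕ) then
          t^((j:ℕ)-(i.rev:ℕ))/((((j:ℕ)-(i.rev:ℕ)).factorial : ℕ):ℝ) else 0) * a j) * b i := by
        apply Finset.sum_congr rfl
        intro j _
        apply Fintype.sum_equiv (Fin.revPerm)
        intro i
        simp only [Fin.revPerm_apply, Fin.rev_rev]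
    _ = ∑ j : Fin m, a j * jordanFlow m t b j.rev := by
        apply Finset.sum_congr rfl
        intro j _
        rw [jordanFlow_apply, Finset.mul_sum]
        apply Finset.sum_congr rfl
        intro i _
        rw [hE i j]
        ring

-- helper: bounded norms from tendsto zero
lemma bdd_of_tendsto_zero {m : ℕ} {f : ℕ → Fin m → ℝ} (h : Tendsto f atTop (𝓝 0)) :
    ∃ M : ℝ, ∀ n, ‖f n‖ ≤ M := by
  obtain ⟨N, hN⟩ := Metric.tendsto_atTop.mp h 1 one_pos
  refine ⟨1 + ∑ k ∈ range (N+1), ‖f k‖, fun n => ?_⟩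
  have hs : 0 ≤ ∑ k ∈ range (N+1), ‖f k‖ :=
    Finset.sum_nonneg fun k _ => norm_nonneg _
  rcases le_or_gt n N with hn | hn
  · have : ‖f n‖ ≤ ∑ k ∈ range (N+1), ‖f k‖ :=
      Finset.single_le_sum (fun k _ => norm_nonneg _) (mem_range.mpr (by omega))
    linarith
  · have := hN n (by omega)
    rw [dist_eq_norm, sub_zero] at this
    linarith

lemma V_subset_C0star (d : ℕ) (hd : 0 < d) :
    {x : Fin (2*d) → ℝ | ∀ i : Fin (2*d), d ≤ (i:ℕ) → x i = 0} ⊆ jordanCoreC0star (2*d) := by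
  intro x hxV ts hts
  obtain ⟨K, hK0, U, hU⟩ := key_construction d hd x hxV
  have hev : ∀ᶠ n in atTop, 1 ≤ |ts n| := hts.eventually_ge_atTop 1
  have hKdiv : Tendsto (fun n => K / |ts n|) atTop (𝓝 0) :=
    tendsto_const_nhds.div_atTop hts
  refine ⟨fun n => if 1 ≤ |ts n| then U (ts n) else x, ?_, ?_⟩
  · rw [← tendsto_sub_nhds_zero_iff]
    apply squeeze_zero_norm' _ hKdiv
    filter_upwards [hev] with n hn
    rw [if_pos hn]
    rw [pi_norm_le_iff_of_nonneg (by positivity)]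
    intro i
    simpa [Real.norm_eq_abs] using (hU (ts n) hn).1 i
  · apply squeeze_zero_norm' _ hKdiv
    filter_upwards [hev] with n hn
    rw [if_pos hn]
    rw [pi_norm_le_iff_of_nonneg (by positivity)]
    intro i
    simpa [Real.norm_eq_abs] using (hU (ts n) hn).2 i

lemma C_subset_V (d : ℕ) (hd : 0 < d) :
    jordanCoreC (2*d) ⊆ {x : Fin (2*d) → ℝ | ∀ i : Fin (2*d), d ≤ (i:ℕ) → x i = 0} := by
  intro x hx
  obtain ⟨tp, tm, up, um, htp, htm, hup, hum, ⟨M, hM⟩, _⟩ := hx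
  intro i hdi
  have hM0 : 0 ≤ M := le_trans (norm_nonneg _) (hM 0)
  set ξ : Fin (2*d) → ℝ := fun j => if j = i.rev then 1 else 0 with hξ
  have hξV : ∀ j : Fin (2*d), d ≤ (j:ℕ) → ξ j = 0 := by
    intro j hj
    rw [hξ]
    dsimp only
    rw [if_neg]
    intro hji
    rw [hji, Fin.val_rev] at hj
    have := i.isLt
    omega
  obtain ⟨K, hK0, U, hU⟩ := key_construction d hd ξ hξV
  set w : ℕ → Fin (2*d) → ℝ := fun n => if 1 ≤ |tp n| then U (-(tp n)) else ξ with hw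
  have hev : ∀ᶠ n in atTop, 1 ≤ |tp n| := by
    filter_upwards [htp.eventually_ge_atTop 1] with n hn
    rw [abs_of_nonneg (by linarith)]
    exact hn
  have habs : Tendsto (fun n => |tp n|) atTop atTop := tendsto_abs_atTop_atTop.comp htp
  have hKdiv : Tendsto (fun n => K / |tp n|) atTop (𝓝 0) := tendsto_const_nhds.div_atTop habs
  set Pn : ℕ → ℝ := fun n => ∑ j : Fin (2*d), up n j * w n j.rev with hPn
  -- convergence of w
  have hwj : ∀ j : Fin (2*d), Tendsto (fun n => w n j) atTop (𝓝 (ξ j)) := by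
    intro j
    rw [← tendsto_sub_nhds_zero_iff]
    apply squeeze_zero_norm' _ hKdiv
    filter_upwards [hev] with n hn
    rw [hw]
    dsimp only
    rw [if_pos hn]
    have h2 : 1 ≤ |-(tp n)| := by rwa [abs_neg]
    have h3 := (hU (-(tp n)) h2).1 j
    rw [abs_neg] at h3
    simpa [Real.norm_eq_abs] using h3
  have hupj : ∀ j : Fin (2*d), Tendsto (fun n => up n j) atTop (𝓝 (x j)) :=
    fun j => tendsto_pi_nhds.mp hup j
  have hlim1 : Tendsto Pn atTop (𝓝 (x i)) := by
    have h1 : Tendsto Pn atTop (𝓝 (∑ j : Fin (2*d), x j * ξ j.rev)) :=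
      tendsto_finset_sum _ (fun j _ => (hupj j).mul (hwj j.rev))
    have h2 : ∑ j : Fin (2*d), x j * ξ j.rev = x i := by
      rw [Finset.sum_eq_single i]
      · rw [hξ]
        dsimp only
        rw [if_pos rfl, mul_one]
      · intro j _ hji
        rw [hξ]
        dsimp only
        rw [if_neg (fun hc => hji (Fin.rev_injective hc)), mul_zero]
      · simp
    rwa [h2] at h1
  have hlim2 : Tendsto Pn atTop (𝓝 0) := by
    have hg : Tendsto (fun n => (2*d : ℝ) * (M * (K / |tp n|))) atTop (𝓝 0) := by
      have := (hKdiv.const_mul M).const_mul (2*d : ℝ)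
      simpa using this
    apply squeeze_zero_norm' _ hg
    filter_upwards [hev] with n hn
    have h2 : 1 ≤ |-(tp n)| := by rwa [abs_neg]
    have hgrp : up n = jordanFlow (2*d) (-(tp n)) (jordanFlow (2*d) (tp n) (up n)) :=
      (jordanFlow_group (2*d) (tp n) (up n)).symm
    have hadj := pairing_adj (2*d) (-(tp n)) (jordanFlow (2*d) (tp n) (up n)) (w n)
    have hPeq : Pn n = ∑ j : Fin (2*d),
        jordanFlow (2*d) (tp n) (up n) j * jordanFlow (2*d) (-(tp n)) (w n) j.rev := by
      rw [hPn]
      dsimp only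
      conv_lhs => rw [hgrp]
      exact hadj
    rw [Real.norm_eq_abs, hPeq]
    calc |∑ j : Fin (2*d),
        jordanFlow (2*d) (tp n) (up n) j * jordanFlow (2*d) (-(tp n)) (w n) j.rev|
        ≤ ∑ j : Fin (2*d),
          |jordanFlow (2*d) (tp n) (up n) j * jordanFlow (2*d) (-(tp n)) (w n) j.rev| :=
        Finset.abs_sum_le_sum_abs _ _
      _ ≤ ∑ _j : Fin (2*d), M * (K / |tp n|) := by
          apply Finset.sum_le_sum
          intro j _
          rw [abs_mul]
          apply mul_le_mul _ _ (abs_nonneg _) hM0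
          · calc |jordanFlow (2*d) (tp n) (up n) j|
                = ‖jordanFlow (2*d) (tp n) (up n) j‖ := (Real.norm_eq_abs _).symm
              _ ≤ ‖jordanFlow (2*d) (tp n) (up n)‖ := norm_le_pi_norm _ _
              _ ≤ M := hM n
          · have hwn : w n = U (-(tp n)) := by rw [hw]; dsimp only; rw [if_pos hn]
            have h3 := (hU (-(tp n)) h2).2 j.rev
            rw [abs_neg] at h3
            rwa [hwn]
      _ = (2*d : ℝ) * (M * (K / |tp n|)) := by
          rw [Finset.sum_const, Finset.card_univ, Fintype.card_fin, nsmul_eq_mul]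
          push_cast
          ring
  exact tendsto_nhds_unique hlim1 hlim2

/-- For the linear flow generated by the nilpotent Jordan block
`J_{2d}` on `ℝ^{2d}` (`d ∈ ℕ`, `d ≥ 1`), the uniform `(0,0)`-core, the `(0,0)`-core,
the uniform core, and the core all equal `V = span{e_1, …, e_d}`. -/
theorem stmt12 (d : ℕ) (hd : 0 < d) :
    jordanCoreC0star (2 * d) = {x : Fin (2 * d) → ℝ | ∀ i : Fin (2 * d), d ≤ (i : ℕ) → x i = 0} ∧
    jordanCoreC0 (2 * d) = {x : Fin (2 * d) → ℝ | ∀ i : Fin (2 * d), d ≤ (i : ℕ) → x i = 0} ∧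
    jordanCoreCstar (2 * d) = {x : Fin (2 * d) → ℝ | ∀ i : Fin (2 * d), d ≤ (i : ℕ) → x i = 0} ∧
    jordanCoreC (2 * d) = {x : Fin (2 * d) → ℝ | ∀ i : Fin (2 * d), d ≤ (i : ℕ) → x i = 0} := by
  have hpos : Tendsto (fun n : ℕ => ((n:ℝ))) atTop atTop := tendsto_natCast_atTop_atTop
  have hneg : Tendsto (fun n : ℕ => -((n:ℝ))) atTop atBot := by
    exact tendsto_neg_atTop_atBot.comp hpos
  have h1 : Tendsto (fun n : ℕ => |((n:ℝ))|) atTop atTop := by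
    simp only [Nat.abs_cast]
    exact hpos
  have h2 : Tendsto (fun n : ℕ => |(-((n:ℝ)))|) atTop atTop := by
    simp only [abs_neg, Nat.abs_cast]
    exact hpos
  have hsubC0 : jordanCoreC0star (2*d) ⊆ jordanCoreC0 (2*d) := by
    intro x hx
    obtain ⟨u1, hu1, hf1⟩ := hx _ h1
    obtain ⟨u2, hu2, hf2⟩ := hx _ h2
    exact ⟨_, _, u1, u2, hpos, hneg, hu1, hu2, hf1, hf2⟩
  have hsubCstar : jordanCoreC0star (2*d) ⊆ jordanCoreCstar (2*d) := by
    intro x hx t ht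
    obtain ⟨u, hu, hf⟩ := hx t ht
    exact ⟨u, hu, bdd_of_tendsto_zero hf⟩
  have hsubC : jordanCoreC0 (2*d) ⊆ jordanCoreC (2*d) := by
    rintro x ⟨tp, tm, up, um, a, b, c, d', e, f⟩
    exact ⟨tp, tm, up, um, a, b, c, d', bdd_of_tendsto_zero e, bdd_of_tendsto_zero f⟩
  have hsubC' : jordanCoreCstar (2*d) ⊆ jordanCoreC (2*d) := by
    intro x hx
    obtain ⟨u1, hu1, hf1⟩ := hx _ h1
    obtain ⟨u2, hu2, hf2⟩ := hx _ h2
    exact ⟨_, _, u1, u2, hpos, hneg, hu1, hu2, hf1, hf2⟩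
  have hCV := C_subset_V d hd
  have hVC := V_subset_C0star d hd
  refine ⟨?_, ?_, ?_, ?_⟩
  · exact Set.Subset.antisymm (subset_trans hsubC0 (subset_trans hsubC hCV)) hVC
  · exact Set.Subset.antisymm (subset_trans hsubC hCV) (subset_trans hVC hsubC0)
  · exact Set.Subset.antisymm (subset_trans hsubC' hCV) (subset_trans hVC hsubCstar)
  · exact Set.Subset.antisymm hCV (subset_trans hVC (subset_trans hsubC0 hsubC))
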